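/- Let p and q be distinct primes with pq dividing the positive integer n, and let d be a divisor of n. Then the number of cyclic subgroups of Z_{pq} × Z_n of order d equals: 1, if gcd(d, pq) = 1; p + 1, if p ∣ d, p² ∤ d and q ∤ d; p, if p² ∣ d and q ∤ d; q + 1, if q ∣ d, q² ∤ d and p ∤ d; q, if q² ∣ d and p ∤ d; pq + p + q + 1, if pq ∣ d, p² ∤ d and q² ∤ d; pq + p, if p² ∣ d, q ∣ d and q² ∤ d; pq + q, if q² ∣ d, p ∣ d and p² ∤ d; and pq, if p²q² ∣ d. -/

import Mathlib

open Polynomial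

/-- The power graph of an additive group `G`: distinct vertices `x` and `y` are adjacent
iff one is an (integral) multiple of the other, i.e. `x ∈ ⟨y⟩` or `y ∈ ⟨x⟩`. -/
def addPowerGraph (G : Type*) [AddGroup G] : SimpleGraph G where
  Adj x y := x ≠ y ∧ (x ∈ AddSubgroup.zmultiples y ∨ y ∈ AddSubgroup.zmultiples x)
  symm := by
    constructor
    intro x y h
    exact ⟨h.1.symm, h.2.symm⟩
  loopless := by
    constructor
    intro x h
    exact h.1 rfl

open Classical in
/-- The adjacency matrix (over `ℤ`) of a finite simple graph. -/
noncomputable def adjMat {V : Type*} [Fintype V] (G : SimpleGraph V) : Matrix V V ℤ :=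
  fun i j => if G.Adj i j then 1 else 0

/-- The number of cyclic subgroups of order `d` of an additive group `G`. -/
noncomputable def numCyclicSubgroups (G : Type*) [AddGroup G] (d : ℕ) : ℕ :=
  Nat.card {H : AddSubgroup G // IsAddCyclic H ∧ Nat.card H = d}

/-!
A cyclic subgroup of order `d` has `φ d` generators, so `numCyclicSubgroups G d * φ d` is the
number of elements of order `d`. In `ZMod r × H` with `r` prime, `(x, y)` has order
`lcm (addOrderOf x) (addOrderOf y)` and every `x ≠ 0` has order `r`; counting elements this way
multiplies the number of cyclic subgroups of order `d` by `cyclicFactor r d`, as long as `H` has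
as many cyclic subgroups of order `d / r` as of order `d` when `r ∥ d` (then
`φ d = (r - 1) * φ (d / r)`). Applied twice to `ZMod p × (ZMod q × ZMod n) ≃ ZMod (p * q) × ZMod n`,
starting from the unique cyclic subgroup of `ZMod n` of each order dividing `n`, this gives
`cyclicFactor p d * cyclicFactor q d`.
-/

open Finset AddSubgroup

theorem AddSubgroup.zmultiples_eq_of_addOrderOf_eq_card {G : Type*} [AddGroup G]
    {H : AddSubgroup G} [Finite H] {x : G} (hx : x ∈ H) (h : addOrderOf x = Nat.card H) :
    zmultiples x = H :=
  eq_of_le_of_card_ge (zmultiples_le.2 hx) (by rw [Nat.card_zmultiples, h])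

theorem numCyclicSubgroups_congr {G G' : Type*} [AddGroup G] [AddGroup G'] (e : G ≃+ G')
    (d : ℕ) : numCyclicSubgroups G d = numCyclicSubgroups G' d :=
  Nat.card_congr <| e.mapAddSubgroup.toEquiv.subtypeEquiv fun H => by
    let f := H.equivMapOfInjective e.toAddMonoidHom e.injective
    refine and_congr f.isAddCyclic ?_
    rw [Nat.card_congr f.toEquiv]
    rfl

theorem numCyclicSubgroups_mul_totient {G : Type*} [AddGroup G] [Fintype G] (d : ℕ) :
    numCyclicSubgroups G d * d.totient = #{x : G | addOrderOf x = d} := by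
  classical
  let T : Finset (AddSubgroup G) := {H | IsAddCyclic H ∧ Nat.card H = d}
  have hT : numCyclicSubgroups G d = #T := by
    rw [numCyclicSubgroups, Nat.card_eq_fintype_card, Fintype.card_subtype]
  have hmaps : ∀ x ∈ ({x | addOrderOf x = d} : Finset G), zmultiples x ∈ T := by
    intro x hx
    simp only [T, mem_filter, mem_univ, true_and] at hx ⊢
    exact ⟨inferInstance, by rw [Nat.card_zmultiples, hx]⟩
  have hfiber : ∀ H ∈ T, #{x ∈ {x | addOrderOf x = d} | zmultiples x = H} = d.totient := by
    intro H hH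
    obtain ⟨hcyc, hcard⟩ := (mem_filter.1 hH).2
    have hgen : ({x ∈ {x | addOrderOf x = d} | zmultiples x = H} : Finset G) =
        ({y : H | addOrderOf y = d} : Finset H).map (Function.Embedding.subtype _) := by
      ext x
      simp only [mem_filter, mem_univ, true_and, Finset.mem_map, Function.Embedding.subtype_apply]
      constructor
      · rintro ⟨hx, rfl⟩
        exact ⟨⟨x, mem_zmultiples x⟩, by rwa [AddSubgroup.addOrderOf_mk], rfl⟩
      · rintro ⟨y, hy, rfl⟩
        rw [AddSubgroup.addOrderOf_coe]
        exact ⟨hy, zmultiples_eq_of_addOrderOf_eq_card y.2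
          (by rw [AddSubgroup.addOrderOf_coe, hy, hcard])⟩
    rw [hgen, card_map, IsAddCyclic.card_addOrderOf_eq_totient]
    rw [← Nat.card_eq_fintype_card, hcard]
  rw [card_eq_sum_card_fiberwise hmaps, sum_const_nat hfiber, hT]

theorem Nat.Prime.lcm_eq_iff_of_sq_dvd {r d k : ℕ} (hr : r.Prime) (hd : r ^ 2 ∣ d) :
    Nat.lcm r k = d ↔ k = d := by
  constructor
  · rintro rfl
    by_cases hrk : r ∣ k
    · exact (Nat.lcm_eq_right hrk).symm
    · rw [Nat.Coprime.lcm_eq_mul (hr.coprime_iff_not_dvd.2 hrk), pow_two] at hd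
      exact absurd (Nat.dvd_of_mul_dvd_mul_left hr.pos hd) hrk
  · rintro rfl
    exact Nat.lcm_eq_right ((dvd_pow_self r two_ne_zero).trans hd)

theorem Nat.Prime.lcm_eq_mul_iff {r m k : ℕ} (hr : r.Prime) (hm : ¬ r ∣ m) :
    Nat.lcm r k = r * m ↔ k = r * m ∨ k = m := by
  constructor
  · intro h
    by_cases hrk : r ∣ k
    · exact .inl ((Nat.lcm_eq_right hrk).symm.trans h)
    · rw [Nat.Coprime.lcm_eq_mul (hr.coprime_iff_not_dvd.2 hrk)] at h
      exact .inr (Nat.eq_of_mul_eq_mul_left hr.pos h)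
  · rintro (rfl | rfl)
    · exact Nat.lcm_eq_right (dvd_mul_right r m)
    · exact Nat.Coprime.lcm_eq_mul (hr.coprime_iff_not_dvd.2 hm)

theorem card_addOrderOf_zmod_prod {r : ℕ} [Fact r.Prime] (H : Type*) [AddGroup H] [Fintype H]
    (d : ℕ) :
    #{z : ZMod r × H | addOrderOf z = d} =
      #{y : H | addOrderOf y = d} + (r - 1) * #{y : H | Nat.lcm r (addOrderOf y) = d} := by
  have hord (x : ZMod r) (hx : x ∈ ({0} : Finset (ZMod r))ᶜ) : addOrderOf x = r :=
    addOrderOf_eq_prime (by rw [nsmul_eq_mul, ZMod.natCast_self, zero_mul]) (by simpa using hx)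
  simp only [card_filter, Fintype.sum_prod_type, Prod.addOrderOf_mk]
  rw [Fintype.sum_eq_add_sum_compl 0]
  rw [sum_congr rfl fun (x : ZMod r) hx => by rw [hord x hx]]
  rw [sum_const, card_compl, ZMod.card, card_singleton, smul_eq_mul]
  simp only [addOrderOf_zero, Nat.lcm_one_left]

/-- The number of cyclic subgroups of order `d` of `ZMod r × ZMod d` for a prime `r`. -/
def cyclicFactor (r d : ℕ) : ℕ := if r ∣ d then if r ^ 2 ∣ d then r else r + 1 else 1

theorem cyclicFactor_of_not_dvd {r d : ℕ} (h : ¬ r ∣ d) : cyclicFactor r d = 1 := if_neg h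

theorem cyclicFactor_of_sq_dvd {r d : ℕ} (h : r ^ 2 ∣ d) : cyclicFactor r d = r := by
  rw [cyclicFactor, if_pos ((dvd_pow_self r two_ne_zero).trans h), if_pos h]

theorem cyclicFactor_of_dvd_of_not_sq_dvd {r d : ℕ} (h₁ : r ∣ d) (h₂ : ¬ r ^ 2 ∣ d) :
    cyclicFactor r d = r + 1 := by
  rw [cyclicFactor, if_pos h₁, if_neg h₂]

theorem cyclicFactor_mul_left {p q m : ℕ} (hpq : Nat.Coprime p q) :
    cyclicFactor q (p * m) = cyclicFactor q m := by
  simp only [cyclicFactor, hpq.symm.dvd_mul_left, (hpq.pow_right 2).symm.dvd_mul_left]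

theorem numCyclicSubgroups_zmod_prod {r : ℕ} [hr : Fact r.Prime] (H : Type*) [AddGroup H]
    [Fintype H] {d : ℕ} (hd : d ≠ 0)
    (hH : ∀ m, d = r * m → ¬ r ∣ m → numCyclicSubgroups H m = numCyclicSubgroups H d) :
    numCyclicSubgroups (ZMod r × H) d = cyclicFactor r d * numCyclicSubgroups H d := by
  classical
  refine Nat.eq_of_mul_eq_mul_right (Nat.totient_pos.2 (Nat.pos_of_ne_zero hd)) ?_
  rw [numCyclicSubgroups_mul_totient, card_addOrderOf_zmod_prod, mul_assoc,
    numCyclicSubgroups_mul_totient]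
  obtain ⟨s, hs⟩ : ∃ s, r = s + 1 := ⟨r - 1, (Nat.sub_add_cancel hr.out.one_le).symm⟩
  by_cases hrd : r ∣ d
  · by_cases hrd2 : r ^ 2 ∣ d
    · rw [filter_congr fun y _ => hr.out.lcm_eq_iff_of_sq_dvd hrd2, cyclicFactor_of_sq_dvd hrd2,
        hs, Nat.add_sub_cancel]
      ring
    · obtain ⟨m, rfl⟩ := hrd
      have hm : ¬ r ∣ m := fun h => hrd2 (pow_two r ▸ mul_dvd_mul_left r h)
      have hφ : (r * m).totient = (r - 1) * m.totient := by
        rw [Nat.totient_mul (hr.out.coprime_iff_not_dvd.2 hm), Nat.totient_prime hr.out]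
      have hmd : m ≠ r * m :=
        ((Nat.lt_mul_iff_one_lt_left (Nat.pos_of_ne_zero (right_ne_zero_of_mul hd))).2
          hr.out.one_lt).ne
      rw [filter_congr fun y _ => hr.out.lcm_eq_mul_iff hm, filter_or,
        card_union_of_disjoint (disjoint_filter.2 fun y _ h₁ h₂ => hmd (h₂.symm.trans h₁)),
        ← numCyclicSubgroups_mul_totient (G := H) m, hH m rfl hm,
        cyclicFactor_of_dvd_of_not_sq_dvd (dvd_mul_right _ m) hrd2,
        ← numCyclicSubgroups_mul_totient, hφ, hs, Nat.add_sub_cancel]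
      ring
  · rw [filter_false_of_mem fun y _ (h : Nat.lcm _ (addOrderOf y) = d) =>
      hrd (h ▸ Nat.dvd_lcm_left _ _), card_empty, cyclicFactor_of_not_dvd hrd,
      ← numCyclicSubgroups_mul_totient]
    ring

theorem numCyclicSubgroups_zmod {n k : ℕ} [NeZero n] (hk : k ∣ n) :
    numCyclicSubgroups (ZMod n) k = 1 := by
  have hk0 : k ≠ 0 := ne_zero_of_dvd_ne_zero (NeZero.ne n) hk
  refine Nat.eq_of_mul_eq_mul_right (Nat.totient_pos.2 (Nat.pos_of_ne_zero hk0)) ?_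
  rw [numCyclicSubgroups_mul_totient, one_mul,
    IsAddCyclic.card_addOrderOf_eq_totient (by rwa [ZMod.card])]

theorem numCyclicSubgroups_zmod_prod_zmod {q n d : ℕ} [Fact q.Prime] [NeZero n] (hd : d ∣ n) :
    numCyclicSubgroups (ZMod q × ZMod n) d = cyclicFactor q d := by
  rw [numCyclicSubgroups_zmod_prod _ (ne_zero_of_dvd_ne_zero (NeZero.ne n) hd) fun m hm _ => ?_,
    numCyclicSubgroups_zmod hd, mul_one]
  rw [numCyclicSubgroups_zmod hd, numCyclicSubgroups_zmod ((Dvd.intro_left q hm.symm).trans hd)]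

theorem numCyclicSubgroups_zmod_mul_prod_zmod {p q n d : ℕ} (hp : p.Prime) (hq : q.Prime)
    (hpq : p ≠ q) [NeZero n] (hd : d ∣ n) :
    numCyclicSubgroups (ZMod (p * q) × ZMod n) d = cyclicFactor p d * cyclicFactor q d := by
  have := Fact.mk hp
  have := Fact.mk hq
  have hcop : Nat.Coprime p q := (Nat.coprime_primes hp hq).2 hpq
  let e : ZMod (p * q) × ZMod n ≃+ ZMod p × (ZMod q × ZMod n) :=
    ((ZMod.chineseRemainder hcop).toAddEquiv.prodCongr (AddEquiv.refl _)).trans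
      AddEquiv.prodAssoc
  rw [numCyclicSubgroups_congr e, numCyclicSubgroups_zmod_prod _
      (ne_zero_of_dvd_ne_zero (NeZero.ne n) hd) fun m hm _ => ?_,
    numCyclicSubgroups_zmod_prod_zmod hd]
  rw [numCyclicSubgroups_zmod_prod_zmod hd,
    numCyclicSubgroups_zmod_prod_zmod ((Dvd.intro_left p hm.symm).trans hd), hm,
    cyclicFactor_mul_left hcop]

theorem num_cyclic_subgroups_Zpq_Zn_general (p q n : ℕ) (hp : p.Prime) (hq : q.Prime)
    (hpq : p ≠ q) [NeZero n] (d : ℕ) (hd : d ∣ n) :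
    (Nat.gcd d (p * q) = 1 → numCyclicSubgroups (ZMod (p * q) × ZMod n) d = 1) ∧
    (p ∣ d → ¬ p ^ 2 ∣ d → ¬ q ∣ d →
      numCyclicSubgroups (ZMod (p * q) × ZMod n) d = p + 1) ∧
    (p ^ 2 ∣ d → ¬ q ∣ d → numCyclicSubgroups (ZMod (p * q) × ZMod n) d = p) ∧
    (q ∣ d → ¬ q ^ 2 ∣ d → ¬ p ∣ d →
      numCyclicSubgroups (ZMod (p * q) × ZMod n) d = q + 1) ∧
    (q ^ 2 ∣ d → ¬ p ∣ d → numCyclicSubgroups (ZMod (p * q) × ZMod n) d = q) ∧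
    (p * q ∣ d → ¬ p ^ 2 ∣ d → ¬ q ^ 2 ∣ d →
      numCyclicSubgroups (ZMod (p * q) × ZMod n) d = p * q + p + q + 1) ∧
    (p ^ 2 ∣ d → q ∣ d → ¬ q ^ 2 ∣ d →
      numCyclicSubgroups (ZMod (p * q) × ZMod n) d = p * q + p) ∧
    (q ^ 2 ∣ d → p ∣ d → ¬ p ^ 2 ∣ d →
      numCyclicSubgroups (ZMod (p * q) × ZMod n) d = p * q + q) ∧
    (p ^ 2 * q ^ 2 ∣ d → numCyclicSubgroups (ZMod (p * q) × ZMod n) d = p * q) := by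
  rw [numCyclicSubgroups_zmod_mul_prod_zmod hp hq hpq hd]
  refine ⟨fun h => ?_, fun h₁ h₂ h₃ => ?_, fun h₁ h₂ => ?_, fun h₁ h₂ h₃ => ?_, fun h₁ h₂ => ?_,
    fun h₁ h₂ h₃ => ?_, fun h₁ h₂ h₃ => ?_, fun h₁ h₂ h₃ => ?_, fun h => ?_⟩
  · have hpd : ¬ p ∣ d := fun hpd => hp.one_lt.ne' (Nat.eq_one_of_dvd_one
      (h ▸ Nat.dvd_gcd hpd (dvd_mul_right p q)))
    have hqd : ¬ q ∣ d := fun hqd => hq.one_lt.ne' (Nat.eq_one_of_dvd_one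
      (h ▸ Nat.dvd_gcd hqd (dvd_mul_left q p)))
    rw [cyclicFactor_of_not_dvd hpd, cyclicFactor_of_not_dvd hqd]
  · rw [cyclicFactor_of_dvd_of_not_sq_dvd h₁ h₂, cyclicFactor_of_not_dvd h₃, mul_one]
  · rw [cyclicFactor_of_sq_dvd h₁, cyclicFactor_of_not_dvd h₂, mul_one]
  · rw [cyclicFactor_of_dvd_of_not_sq_dvd h₁ h₂, cyclicFactor_of_not_dvd h₃, one_mul]
  · rw [cyclicFactor_of_sq_dvd h₁, cyclicFactor_of_not_dvd h₂, one_mul]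
  · rw [cyclicFactor_of_dvd_of_not_sq_dvd ((dvd_mul_right p q).trans h₁) h₂,
      cyclicFactor_of_dvd_of_not_sq_dvd ((dvd_mul_left q p).trans h₁) h₃]
    ring
  · rw [cyclicFactor_of_sq_dvd h₁, cyclicFactor_of_dvd_of_not_sq_dvd h₂ h₃]
    ring
  · rw [cyclicFactor_of_dvd_of_not_sq_dvd h₂ h₃, cyclicFactor_of_sq_dvd h₁]
    ring
  · rw [cyclicFactor_of_sq_dvd ((dvd_mul_right _ _).trans h),
      cyclicFactor_of_sq_dvd ((dvd_mul_left _ _).trans h)]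

/-- For distinct primes `p, q` with `pq ∣ n` and a divisor `d` of `n`, the number of
cyclic subgroups of `Z_{pq} × Z_n` of order `d` in each of the nine cases. -/
theorem num_cyclic_subgroups_Zpq_Zn (p q n : ℕ) (hp : p.Prime) (hq : q.Prime)
    (hpq : p ≠ q) [NeZero n] (hn : p * q ∣ n) (d : ℕ) (hd : d ∣ n) :
    (Nat.gcd d (p * q) = 1 → numCyclicSubgroups (ZMod (p * q) × ZMod n) d = 1) ∧
    (p ∣ d → ¬ p ^ 2 ∣ d → ¬ q ∣ d →
      numCyclicSubgroups (ZMod (p * q) × ZMod n) d = p + 1) ∧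
    (p ^ 2 ∣ d → ¬ q ∣ d → numCyclicSubgroups (ZMod (p * q) × ZMod n) d = p) ∧
    (q ∣ d → ¬ q ^ 2 ∣ d → ¬ p ∣ d →
      numCyclicSubgroups (ZMod (p * q) × ZMod n) d = q + 1) ∧
    (q ^ 2 ∣ d → ¬ p ∣ d → numCyclicSubgroups (ZMod (p * q) × ZMod n) d = q) ∧
    (p * q ∣ d → ¬ p ^ 2 ∣ d → ¬ q ^ 2 ∣ d →
      numCyclicSubgroups (ZMod (p * q) × ZMod n) d = p * q + p + q + 1) ∧
    (p ^ 2 ∣ d → q ∣ d → ¬ q ^ 2 ∣ d →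
      numCyclicSubgroups (ZMod (p * q) × ZMod n) d = p * q + p) ∧
    (q ^ 2 ∣ d → p ∣ d → ¬ p ^ 2 ∣ d →
      numCyclicSubgroups (ZMod (p * q) × ZMod n) d = p * q + q) ∧
    (p ^ 2 * q ^ 2 ∣ d → numCyclicSubgroups (ZMod (p * q) × ZMod n) d = p * q) :=
  num_cyclic_subgroups_Zpq_Zn_general p q n hp hq hpq d hd
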